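/- If a probability measure μ on ℤ is Ritt, then for every integer m ≥ 1 one has sup_{n∈ℕ} n^m ‖μ^{*n} * (δ₀ − μ)^{*m}‖_{ℓ¹(ℤ)} < ∞. -/
import Mathlib

noncomputable def conv (f g : ℤ → ℝ) : ℤ → ℝ := fun k => ∑' j : ℤ, f j * g (k - j)

noncomputable def convPow (f : ℤ → ℝ) : ℕ → ℤ → ℝ
  | 0 => fun k => if k = 0 then 1 else 0
  | n + 1 => conv f (convPow f n)

noncomputable def l1norm (f : ℤ → ℝ) : ℝ := ∑' k : ℤ, |f k|

def IsProbZ (f : ℤ → ℝ) : Prop := (∀ k, 0 ≤ f k) ∧ Summable f ∧ ∑' k : ℤ, f k = 1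

def IsRitt (f : ℤ → ℝ) : Prop :=
  ∃ C : ℝ, ∀ n : ℕ, 1 ≤ n →
    (n : ℝ) * l1norm (fun k => convPow f n k - convPow f (n + 1) k) ≤ C

namespace RittAux

lemma sabs {ι : Type*} {f : ι → ℝ} (h : Summable f) : Summable fun i => |f i| := by
  simpa [Real.norm_eq_abs] using h.norm

noncomputable def delta : ℤ → ℝ := fun k => if k = 0 then 1 else 0

lemma summable_delta : Summable delta := by
  apply summable_of_ne_finset_zero (s := ({0} : Finset ℤ))
  intro k hk
  simp only [Finset.mem_singleton] at hk
  simp [delta, hk]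

def shear : ℤ × ℤ ≃ ℤ × ℤ where
  toFun p := (p.1, p.2 + p.1)
  invFun p := (p.1, p.2 - p.1)
  left_inv p := by simp
  right_inv p := by simp

lemma summable_shifted {f g : ℤ → ℝ} (hf : Summable f) (hg : Summable g) :
    Summable (fun p : ℤ × ℤ => f p.1 * g (p.2 - p.1)) := by
  rw [← shear.summable_iff]
  have : ((fun p : ℤ × ℤ => f p.1 * g (p.2 - p.1)) ∘ shear) =
      fun p : ℤ × ℤ => f p.1 * g p.2 := by
    funext p; simp [shear]
  rw [this]
  exact Summable.of_norm (hf.norm.mul_norm hg.norm)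

lemma summable_term {f g : ℤ → ℝ} (hf : Summable f) (hg : Summable g) (k : ℤ) :
    Summable (fun j => f j * g (k - j)) := by
  have h := summable_shifted hf hg
  rw [← (Equiv.prodComm ℤ ℤ).summable_iff] at h
  exact h.prod_factor k

lemma conv_comm (f g : ℤ → ℝ) : conv f g = conv g f := by
  funext k
  unfold conv
  rw [← (Equiv.subLeft k).tsum_eq (fun j => f j * g (k - j))]
  apply tsum_congr
  intro i
  simp [Equiv.subLeft, mul_comm]

lemma conv_delta (f : ℤ → ℝ) : conv delta f = f := by
  funext k
  unfold conv
  rw [tsum_eq_single 0 (by intro j hj; simp [delta, hj])]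
  simp [delta]

lemma abs_le_l1norm {g : ℤ → ℝ} (hg : Summable g) (x : ℤ) : |g x| ≤ l1norm g :=
  Summable.le_tsum (sabs hg) x (fun _ _ => abs_nonneg _)

lemma l1norm_nonneg (f : ℤ → ℝ) : 0 ≤ l1norm f := tsum_nonneg (fun _ => abs_nonneg _)

lemma conv_assoc {f g h : ℤ → ℝ} (hf : Summable f) (hg : Summable g) (hh : Summable h) :
    conv (conv f g) h = conv f (conv g h) := by
  funext k
  have hM : ∀ x, |h x| ≤ l1norm h := abs_le_l1norm hh
  set G : ℤ × ℤ → ℝ := fun p => f p.1 * (g p.2 * h (k - p.1 - p.2)) with hG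
  have hGsum : Summable G := by
    have hprod : Summable (fun p : ℤ × ℤ => |f p.1| * |g p.2|) := by
      have := hf.norm.mul_norm hg.norm
      simpa [Real.norm_eq_abs, abs_mul] using this
    have hmaj : Summable (fun p : ℤ × ℤ => (|f p.1| * |g p.2|) * l1norm h) :=
      hprod.mul_right _
    apply Summable.of_norm
    refine Summable.of_nonneg_of_le (fun p => norm_nonneg _) (fun p => ?_) hmaj
    simp only [Real.norm_eq_abs, hG]
    have h5 : f p.1 * (g p.2 * h (k - p.1 - p.2)) = (f p.1 * g p.2) * h (k - p.1 - p.2) := by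
      ring
    rw [h5, abs_mul, abs_mul]
    exact mul_le_mul_of_nonneg_left (hM _) (mul_nonneg (abs_nonneg _) (abs_nonneg _))
  have h1 : conv f (conv g h) k = ∑' p : ℤ × ℤ, G p := by
    unfold conv
    rw [Summable.tsum_prod' hGsum (fun b => hGsum.prod_factor b)]
    apply tsum_congr; intro j
    simp only [hG]
    rw [tsum_mul_left]
  have h2 : conv (conv f g) h k = ∑' p : ℤ × ℤ, G p := by
    unfold conv
    set F : ℤ × ℤ → ℝ := fun p => (f p.2 * g (p.1 - p.2)) * h (k - p.1) with hF
    set e : ℤ × ℤ ≃ ℤ × ℤ :=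
      ⟨fun p => (p.2 + p.1, p.1), fun p => (p.2, p.1 - p.2), fun p => by simp,
        fun p => by simp⟩ with he
    have hFe : ∀ p : ℤ × ℤ, F (e p) = G p := by
      intro p
      simp only [hF, hG, he, Equiv.coe_fn_mk]
      have h3 : p.2 + p.1 - p.1 = p.2 := by ring
      have h4 : k - (p.2 + p.1) = k - p.1 - p.2 := by ring
      rw [h3, h4]; ring
    have hFsum : Summable F := by
      rw [← e.summable_iff]
      have : (F ∘ e) = G := funext hFe
      rw [this]; exact hGsum
    have hstep : ∑' i : ℤ, (∑' j : ℤ, f j * g (i - j)) * h (k - i)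
        = ∑' p : ℤ × ℤ, F p := by
      rw [Summable.tsum_prod' hFsum (fun b => hFsum.prod_factor b)]
      apply tsum_congr; intro i
      simp only [hF]
      rw [tsum_mul_right]
    rw [hstep, ← e.tsum_eq F]
    exact tsum_congr hFe
  rw [h1, h2]

lemma summable_conv {f g : ℤ → ℝ} (hf : Summable f) (hg : Summable g) :
    Summable (conv f g) := by
  have hH : Summable (fun p : ℤ × ℤ => |f p.2| * |g (p.1 - p.2)|) := by
    have h := summable_shifted (sabs hf) (sabs hg)
    rw [← (Equiv.prodComm ℤ ℤ).summable_iff] at h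
    exact h
  have houter : Summable (fun k : ℤ => ∑' j : ℤ, |f j| * |g (k - j)|) :=
    ((summable_prod_of_nonneg (fun p => mul_nonneg (abs_nonneg _) (abs_nonneg _))).mp hH).2
  apply Summable.of_norm
  apply Summable.of_nonneg_of_le (fun k => norm_nonneg _) _ houter
  intro k
  rw [Real.norm_eq_abs]
  have habs : Summable (fun j : ℤ => ‖f j * g (k - j)‖) := by
    have := summable_term (sabs hf) (sabs hg) k
    simpa [Real.norm_eq_abs, abs_mul] using this
  calc |conv f g k| ≤ ∑' j : ℤ, ‖f j * g (k - j)‖ := norm_tsum_le_tsum_norm habs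
    _ = ∑' j : ℤ, |f j| * |g (k - j)| := by
        apply tsum_congr; intro j; rw [Real.norm_eq_abs, abs_mul]

lemma l1norm_conv_le {f g : ℤ → ℝ} (hf : Summable f) (hg : Summable g) :
    l1norm (conv f g) ≤ l1norm f * l1norm g := by
  have hH : Summable (fun p : ℤ × ℤ => |f p.2| * |g (p.1 - p.2)|) := by
    have h := summable_shifted (sabs hf) (sabs hg)
    rw [← (Equiv.prodComm ℤ ℤ).summable_iff] at h
    exact h
  have houter : Summable (fun k : ℤ => ∑' j : ℤ, |f j| * |g (k - j)|) :=
    ((summable_prod_of_nonneg (fun p => mul_nonneg (abs_nonneg _) (abs_nonneg _))).mp hH).2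
  have hterm : ∀ k : ℤ, |conv f g k| ≤ ∑' j : ℤ, |f j| * |g (k - j)| := by
    intro k
    have habs : Summable (fun j : ℤ => ‖f j * g (k - j)‖) := by
      have := summable_term (sabs hf) (sabs hg) k
      simpa [Real.norm_eq_abs, abs_mul] using this
    calc |conv f g k| ≤ ∑' j : ℤ, ‖f j * g (k - j)‖ := norm_tsum_le_tsum_norm habs
      _ = ∑' j : ℤ, |f j| * |g (k - j)| := by
          apply tsum_congr; intro j; rw [Real.norm_eq_abs, abs_mul]
  have hswap : (∑' p : ℤ × ℤ, |f p.2| * |g (p.1 - p.2)|)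
      = ∑' p : ℤ × ℤ, |f p.1| * |g p.2| := by
    set e : ℤ × ℤ ≃ ℤ × ℤ :=
      ⟨fun p => (p.2 + p.1, p.1), fun p => (p.2, p.1 - p.2), fun p => by simp,
        fun p => by simp⟩ with he
    rw [← e.tsum_eq (fun p : ℤ × ℤ => |f p.2| * |g (p.1 - p.2)|)]
    apply tsum_congr
    intro p
    simp only [he, Equiv.coe_fn_mk]
    have h3 : p.2 + p.1 - p.1 = p.2 := by ring
    rw [h3]
  calc l1norm (conv f g) ≤ ∑' k : ℤ, ∑' j : ℤ, |f j| * |g (k - j)| :=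
        Summable.tsum_le_tsum hterm (sabs (summable_conv hf hg)) houter
    _ = ∑' p : ℤ × ℤ, |f p.2| * |g (p.1 - p.2)| :=
        (Summable.tsum_prod' hH (fun b => hH.prod_factor b)).symm
    _ = ∑' p : ℤ × ℤ, |f p.1| * |g p.2| := hswap
    _ = l1norm f * l1norm g := by
        have hprod : Summable (fun p : ℤ × ℤ => |f p.1| * |g p.2|) := by
          have := hf.norm.mul_norm hg.norm
          simpa [Real.norm_eq_abs, abs_mul] using this
        rw [Summable.tsum_prod' hprod (fun b => hprod.prod_factor b)]
        unfold l1norm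
        rw [← tsum_mul_right]
        apply tsum_congr
        intro j
        simp only [tsum_mul_left]

abbrev L1 : Type := {f : ℤ → ℝ // Summable f}

noncomputable instance : CommMonoid L1 where
  mul a b := ⟨conv a.1 b.1, summable_conv a.2 b.2⟩
  one := ⟨delta, summable_delta⟩
  mul_assoc a b c := Subtype.ext (conv_assoc a.2 b.2 c.2)
  one_mul a := Subtype.ext (conv_delta a.1)
  mul_one a := Subtype.ext (by show conv a.1 delta = a.1; rw [conv_comm, conv_delta])
  mul_comm a b := Subtype.ext (conv_comm a.1 b.1)

lemma L1.mul_val (a b : L1) : (a * b).1 = conv a.1 b.1 := rfl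
lemma L1.one_val : (1 : L1).1 = delta := rfl

lemma L1.pow_val (f : ℤ → ℝ) (hf : Summable f) (n : ℕ) :
    ((⟨f, hf⟩ : L1) ^ n).1 = convPow f n := by
  induction n with
  | zero => rw [pow_zero]; rfl
  | succ n ih =>
      rw [pow_succ, L1.mul_val, ih]
      show conv (convPow f n) f = convPow f (n + 1)
      rw [conv_comm]
      rfl

lemma summable_convPow {f : ℤ → ℝ} (hf : Summable f) (n : ℕ) : Summable (convPow f n) := by
  rw [← L1.pow_val f hf n]
  exact (((⟨f, hf⟩ : L1)) ^ n).2

lemma l1norm_delta : l1norm delta = 1 := by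
  unfold l1norm
  rw [tsum_eq_single 0 (by intro j hj; simp [delta, hj])]
  simp [delta]

lemma l1norm_pow_le (a : L1) (n : ℕ) : l1norm ((a ^ n).1) ≤ l1norm a.1 ^ n := by
  induction n with
  | zero => rw [pow_zero, pow_zero, L1.one_val, l1norm_delta]
  | succ n ih =>
      rw [pow_succ, pow_succ, L1.mul_val]
      calc l1norm (conv ((a ^ n).1) a.1) ≤ l1norm ((a ^ n).1) * l1norm a.1 :=
            l1norm_conv_le (a ^ n).2 a.2
        _ ≤ l1norm a.1 ^ n * l1norm a.1 :=
            mul_le_mul_of_nonneg_right ih (l1norm_nonneg _)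

lemma l1norm_sub_le (f g : ℤ → ℝ) (hf : Summable f) (hg : Summable g) :
    l1norm (fun k => f k - g k) ≤ l1norm f + l1norm g := by
  unfold l1norm
  rw [← Summable.tsum_add (sabs hf) (sabs hg)]
  apply Summable.tsum_le_tsum _ (sabs (hf.sub hg)) ((sabs hf).add (sabs hg))
  intro k
  exact abs_sub _ _

end RittAux

namespace RittAux
lemma L1.pow_val' (a : L1) (n : ℕ) : (a ^ n).1 = convPow a.1 n := by
  obtain ⟨f, hf⟩ := a
  exact L1.pow_val f hf n
end RittAux

open RittAux in
/-- If `μ` is Ritt then for every `m ≥ 1`,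
`sup_n n^m ‖μ^{*n} * (δ₀ − μ)^{*m}‖_{ℓ¹} < ∞`. -/
theorem ritt_higher_powers (μ : ℤ → ℝ) (hμ : IsProbZ μ) (hr : IsRitt μ)
    (m : ℕ) (hm : 1 ≤ m) :
    ∃ C : ℝ, ∀ n : ℕ,
      (n : ℝ) ^ m *
        l1norm (conv (convPow μ n)
          (convPow (fun k => (if k = 0 then (1 : ℝ) else 0) - μ k) m)) ≤ C := by
  obtain ⟨hpos, hsum, htot⟩ := hμ
  obtain ⟨C, hC⟩ := hr
  set D : ℤ → ℝ := fun k => (if k = 0 then (1 : ℝ) else 0) - μ k with hDdef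
  have hDsum : Summable D := Summable.sub summable_delta hsum
  set x : L1 := ⟨μ, hsum⟩ with hx
  set d : L1 := ⟨D, hDsum⟩ with hd
  have hμ1 : l1norm μ = 1 := by
    unfold l1norm
    rw [← htot]
    exact tsum_congr fun k => abs_of_nonneg (hpos k)
  have hxpow : ∀ n : ℕ, l1norm ((x ^ n).1) ≤ 1 := by
    intro n
    calc l1norm ((x ^ n).1) ≤ l1norm x.1 ^ n := l1norm_pow_le x n
      _ = 1 := by rw [show x.1 = μ from rfl, hμ1, one_pow]
  have hC0 : 0 ≤ C := by
    have h1 := hC 1 le_rfl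
    have h2 := l1norm_nonneg (fun k => convPow μ 1 k - convPow μ (1 + 1) k)
    push_cast at h1
    linarith
  have hD2 : l1norm D ≤ 2 := by
    have h := l1norm_sub_le delta μ summable_delta hsum
    rw [l1norm_delta, hμ1] at h
    calc l1norm D = l1norm (fun k => delta k - μ k) := rfl
      _ ≤ 1 + 1 := h
      _ = 2 := by norm_num
  have hA : ∀ ℓ : ℕ, 1 ≤ ℓ → l1norm ((x ^ ℓ * d).1) ≤ C / ℓ := by
    intro ℓ hℓ
    have hid : (x ^ ℓ * d).1 = fun k => convPow μ ℓ k - convPow μ (ℓ + 1) k := by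
      rw [L1.mul_val, L1.pow_val']
      funext k
      have hP : Summable (convPow μ ℓ) := summable_convPow hsum ℓ
      have e1 : conv (convPow μ ℓ) delta = convPow μ ℓ := by
        rw [conv_comm, conv_delta]
      have e2 : conv (convPow μ ℓ) μ = convPow μ (ℓ + 1) := by
        rw [conv_comm]; rfl
      calc conv (convPow μ ℓ) d.1 k
          = ∑' j : ℤ, (convPow μ ℓ j * delta (k - j) - convPow μ ℓ j * μ (k - j)) := by
            apply tsum_congr
            intro j
            show convPow μ ℓ j * D (k - j) = _
            rw [hDdef]
            show convPow μ ℓ j * (delta (k - j) - μ (k - j)) = _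
            ring
        _ = (∑' j : ℤ, convPow μ ℓ j * delta (k - j))
            - ∑' j : ℤ, convPow μ ℓ j * μ (k - j) :=
            Summable.tsum_sub (summable_term hP summable_delta k) (summable_term hP hsum k)
        _ = convPow μ ℓ k - convPow μ (ℓ + 1) k := by
            show conv (convPow μ ℓ) delta k - conv (convPow μ ℓ) μ k = _
            rw [e1, e2]
    have hl0 : (0 : ℝ) < (ℓ : ℝ) := by exact_mod_cast hℓ
    have h := hC ℓ hℓ
    rw [← hid] at h
    rw [le_div_iff₀ hl0]
    linarith [h]
  refine ⟨max ((m : ℝ) ^ m * 2 ^ m) ((2 * (m : ℝ) * C) ^ m), ?_⟩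
  intro n
  have hgoalval : conv (convPow μ n) (convPow D m) = ((x ^ n * d ^ m).1) := by
    rw [L1.mul_val, L1.pow_val', L1.pow_val']
  rw [hgoalval]
  by_cases hn : n < m
  · -- small n
    have hT : l1norm ((x ^ n * d ^ m).1) ≤ 2 ^ m := by
      calc l1norm ((x ^ n * d ^ m).1)
          ≤ l1norm ((x ^ n).1) * l1norm ((d ^ m).1) :=
            l1norm_conv_le (x ^ n).2 (d ^ m).2
        _ ≤ 1 * (l1norm d.1) ^ m := by
            apply mul_le_mul (hxpow n) (l1norm_pow_le d m) (l1norm_nonneg _) zero_le_one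
        _ ≤ 1 * 2 ^ m := by
            apply mul_le_mul_of_nonneg_left _ zero_le_one
            exact pow_le_pow_left₀ (l1norm_nonneg _) hD2 m
        _ = 2 ^ m := one_mul _
    have hnm : (n : ℝ) ^ m ≤ (m : ℝ) ^ m := by
      apply pow_le_pow_left₀ (by positivity)
      exact_mod_cast hn.le
    calc (n : ℝ) ^ m * l1norm ((x ^ n * d ^ m).1)
        ≤ (m : ℝ) ^ m * 2 ^ m := by
          apply mul_le_mul hnm hT (l1norm_nonneg _) (by positivity)
      _ ≤ max ((m : ℝ) ^ m * 2 ^ m) ((2 * (m : ℝ) * C) ^ m) := le_max_left _ _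
  · push_neg at hn
    set ℓ := n / m with hℓdef
    set r := n % m with hrdef
    have hm0 : 0 < m := hm
    have hℓ1 : 1 ≤ ℓ := (Nat.one_le_div_iff hm0).mpr hn
    have hsplit : m * ℓ + r = n := Nat.div_add_mod n m
    have hrm : r < m := Nat.mod_lt n hm0
    have key : x ^ n * d ^ m = x ^ r * (x ^ ℓ * d) ^ m := by
      rw [mul_pow, ← pow_mul, ← mul_assoc, ← pow_add]
      have hexp : r + ℓ * m = n := by
        rw [mul_comm ℓ m]
        omega
      rw [hexp]
    have hnle : n ≤ 2 * (m * ℓ) := by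
      have h2 : m ≤ m * ℓ := Nat.le_mul_of_pos_right m (by omega)
      omega
    have hl0 : (0 : ℝ) < (ℓ : ℝ) := by exact_mod_cast hℓ1
    have hT : l1norm ((x ^ n * d ^ m).1) ≤ (C / ℓ) ^ m := by
      rw [key]
      calc l1norm ((x ^ r * (x ^ ℓ * d) ^ m).1)
          ≤ l1norm ((x ^ r).1) * l1norm (((x ^ ℓ * d) ^ m).1) :=
            l1norm_conv_le (x ^ r).2 ((x ^ ℓ * d) ^ m).2
        _ ≤ 1 * (l1norm ((x ^ ℓ * d).1)) ^ m := by
            apply mul_le_mul (hxpow r) (l1norm_pow_le _ m) (l1norm_nonneg _) zero_le_one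
        _ ≤ 1 * (C / ℓ) ^ m := by
            apply mul_le_mul_of_nonneg_left _ zero_le_one
            exact pow_le_pow_left₀ (l1norm_nonneg _) (hA ℓ hℓ1) m
        _ = (C / ℓ) ^ m := one_mul _
    have hfrac : (n : ℝ) * (C / ℓ) ≤ 2 * (m : ℝ) * C := by
      have h1 : (n : ℝ) ≤ 2 * ((m : ℝ) * ℓ) := by exact_mod_cast hnle
      have h2 : 0 ≤ C / (ℓ : ℝ) := div_nonneg hC0 hl0.le
      calc (n : ℝ) * (C / ℓ) ≤ (2 * ((m : ℝ) * ℓ)) * (C / ℓ) :=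
            mul_le_mul_of_nonneg_right h1 h2
        _ = 2 * (m : ℝ) * C := by
            field_simp
    calc (n : ℝ) ^ m * l1norm ((x ^ n * d ^ m).1)
        ≤ (n : ℝ) ^ m * (C / ℓ) ^ m := by
          apply mul_le_mul_of_nonneg_left hT (by positivity)
      _ = ((n : ℝ) * (C / ℓ)) ^ m := (mul_pow _ _ _).symm
      _ ≤ (2 * (m : ℝ) * C) ^ m := by
          apply pow_le_pow_left₀ _ hfrac
          exact mul_nonneg (Nat.cast_nonneg n) (div_nonneg hC0 hl0.le)
      _ ≤ max ((m : ℝ) ^ m * 2 ^ m) ((2 * (m : ℝ) * C) ^ m) := le_max_right _ _
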